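/- Let V be a finite-dimensional real inner product space and R : Λ²V → Λ²V a self-adjoint linear map satisfying the first Bianchi identity: R(X∧Y)Z + R(Y∧Z)X + R(Z∧X)Y = 0 for all X,Y,Z ∈ V (identifying Λ²V with anti-symmetric endomorphisms). Suppose V = ⊕ᵢ Vᵢ is an orthogonal decomposition such that each Vᵢ is invariant under every endomorphism in the image of R. Then R(X∧Y) = 0 whenever X ∈ Vᵢ, Y ∈ Vⱼ with i ≠ j. -/

import Mathlib

open scoped RealInnerProductSpace

theorem curvature_operator_offdiagonal_vanishes
    {V : Type*} [NormedAddCommGroup V] [InnerProductSpace ℝ V]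
    {ι : Type*} (Vs : ι → Submodule ℝ V)
    (R : V →ₗ[ℝ] V →ₗ[ℝ] (V →ₗ[ℝ] V))
    (hpair : ∀ X Y Z W : V, ⟪R X Y Z, W⟫ = ⟪R Z W X, Y⟫)
    (hortho : ∀ i j, i ≠ j → ∀ x ∈ Vs i, ∀ y ∈ Vs j, ⟪x, y⟫ = 0)
    (hinv : ∀ i (X Y : V), (Vs i).map (R X Y) ≤ Vs i)
    {i j : ι} (hij : i ≠ j) {X Y : V} (hX : X ∈ Vs i) (hY : Y ∈ Vs j) :
    R X Y = 0 := by
  ext Z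
  refine ext_inner_right ℝ fun W => ?_
  have hRX : R Z W X ∈ Vs i := hinv i Z W (Submodule.mem_map_of_mem hX)
  rw [LinearMap.zero_apply, inner_zero_left, hpair]
  exact hortho i j hij _ hRX Y hY
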